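/- arXiv:1410.0214 — 2 statements merged into one kernel-verified Lean document; each statement's English description precedes it below -/
import Mathlib

section
/- Let X_0 be a real-valued random variable such that 0 < G(r) < ∞ for every r ≥ 0 and for every ε > 0, G(r+ε)/G(r) → 0 as r → ∞. Then for every r ≥ 0, E[(U_r(X_0))² · 1(|U_r(X_0)| ≥ ε)] ≤ 8·G(r + ε/2) for every ε > 0. -/
open MeasureTheory ProbabilityTheory Filter Asymptotics
open scoped ENNReal Topology NNReal

noncomputable section

/-- The shrinking operator `U_r : ℝ → ℝ` (for `r ≥ 0`):
`U_r(x) = x - r` if `x > r`, `0` if `|x| ≤ r`, and `x + r` if `x < -r`. -/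
def shrink (r x : ℝ) : ℝ := if r < x then x - r else if x < -r then x + r else 0

variable {Ω : Type*}

/-- `G(r) := ∫₀^∞ t · P(|X| > t + r) dt`. -/
def Gfun [MeasurableSpace Ω] (P : Measure Ω) (X : Ω → ℝ) (r : ℝ) : ℝ≥0∞ :=
  ∫⁻ t in Set.Ioi (0 : ℝ), ENNReal.ofReal t * P {ω | t + r < |X ω|}

/-- Strict stationarity of a two-sided sequence of random variables: for all `j, l ∈ ℤ`
and `m ≥ 0`, the random vectors `(X_j, …, X_{j+m})` and `(X_l, …, X_{l+m})` have the
same distribution. -/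
def StrictlyStationary [MeasurableSpace Ω] (P : Measure Ω) (X : ℤ → Ω → ℝ) : Prop :=
  ∀ (j l : ℤ) (m : ℕ),
    Measure.map (fun ω => fun i : Fin (m + 1) => X (j + i) ω) P =
    Measure.map (fun ω => fun i : Fin (m + 1) => X (l + i) ω) P

/-- The correlation coefficient of two real random variables. -/
def corr [MeasurableSpace Ω] (P : Measure Ω) (f g : Ω → ℝ) : ℝ :=
  (∫ ω, (f ω - ∫ x, f x ∂P) * (g ω - ∫ x, g x ∂P) ∂P) /
    (Real.sqrt (∫ ω, (f ω - ∫ x, f x ∂P) ^ 2 ∂P) *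
      Real.sqrt (∫ ω, (g ω - ∫ x, g x ∂P) ^ 2 ∂P))

/-- The maximal correlation coefficient `ρ(𝒜, ℬ)`: the supremum of `|Corr(f,g)|` over
square-integrable `f` measurable w.r.t. `𝒜` and `g` measurable w.r.t. `ℬ`. -/
def maxCorr [mΩ : MeasurableSpace Ω] (P : Measure Ω) (A B : MeasurableSpace Ω) : ℝ :=
  sSup { c | ∃ f g : Ω → ℝ, Measurable[A] f ∧ Measurable[B] g ∧
    @MemLp Ω ℝ mΩ _ _ f 2 P ∧ @MemLp Ω ℝ mΩ _ _ g 2 P ∧ c = |@corr Ω mΩ P f g| }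

/-- The strong mixing coefficient `α(𝒜, ℬ)`. -/
def alphaMix [MeasurableSpace Ω] (P : Measure Ω) (A B : MeasurableSpace Ω) : ℝ :=
  sSup { c | ∃ s t : Set Ω, MeasurableSet[A] s ∧ MeasurableSet[B] t ∧
    c = |(P (s ∩ t)).toReal - (P s).toReal * (P t).toReal| }

/-- The σ-field generated by the random variables `X k`, `k ∈ S`. -/
def genFrom [MeasurableSpace Ω] (X : ℤ → Ω → ℝ) (S : Set ℤ) : MeasurableSpace Ω :=
  ⨆ k ∈ S, MeasurableSpace.comap (X k) inferInstance

/-- `ρ(n) = ρ(σ(X_k, k ≤ 0), σ(X_k, k ≥ n))`. -/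
def rhoCoef [MeasurableSpace Ω] (P : Measure Ω) (X : ℤ → Ω → ℝ) (n : ℕ) : ℝ :=
  maxCorr P (genFrom X {k | k ≤ 0}) (genFrom X {k | (n : ℤ) ≤ k})

/-- `α(n) = α(σ(X_k, k ≤ 0), σ(X_k, k ≥ n))`. -/
def alphaCoef [MeasurableSpace Ω] (P : Measure Ω) (X : ℤ → Ω → ℝ) (n : ℕ) : ℝ :=
  alphaMix P (genFrom X {k | k ≤ 0}) (genFrom X {k | (n : ℤ) ≤ k})

/-- `ρ*(n)`: the supremum of `ρ(σ(X_k, k ∈ S), σ(X_k, k ∈ T))` over all pairs of nonempty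
disjoint `S, T ⊆ ℤ` with `dist(S,T) ≥ n`. -/
def rhoStarCoef [MeasurableSpace Ω] (P : Measure Ω) (X : ℤ → Ω → ℝ) (n : ℕ) : ℝ :=
  sSup { c | ∃ S T : Set ℤ, S.Nonempty ∧ T.Nonempty ∧ Disjoint S T ∧
    (∀ s ∈ S, ∀ t ∈ T, (n : ℤ) ≤ |s - t|) ∧
    c = maxCorr P (genFrom X S) (genFrom X T) }

/-- `Y_{k,r} := U_r(X_k) - E[U_r(X_0)]`. -/
def Ymix [MeasurableSpace Ω] (P : Measure Ω) (X : ℤ → Ω → ℝ) (k : ℤ) (r : ℝ) (ω : Ω) : ℝ :=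
  shrink r (X k ω) - ∫ ω', shrink r (X 0 ω') ∂P

/-! On `{ε ≤ |U_r X|}` one has `|U_r X| ≤ 2 |U_{r+ε/2} X|`, so the truncated moment is at most
`4 E[U_{r+ε/2}(X)²]`. By the layer-cake formula,
`E[U_s(X)²] = 2 ∫₀^∞ t P(|U_s X| > t) dt = 2 G(s)`,
because `|U_s X| > t ↔ |X| > t + s` for `t ≥ 0`. -/

lemma measurable_shrink (r : ℝ) : Measurable (shrink r) :=
  Measurable.ite measurableSet_Ioi (measurable_id.sub_const r)
    (Measurable.ite measurableSet_Iio (measurable_id.add_const r) measurable_const)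

lemma AEMeasurable.shrink {α : Type*} [MeasurableSpace α] {μ : Measure α} {f : α → ℝ}
    (hf : AEMeasurable f μ) (r : ℝ) : AEMeasurable (fun a => shrink r (f a)) μ :=
  (measurable_shrink r).comp_aemeasurable hf

lemma abs_shrink {r : ℝ} (hr : 0 ≤ r) (x : ℝ) : |shrink r x| = max (|x| - r) 0 := by
  unfold shrink
  split_ifs <;> simp only [abs_eq_max_neg] <;> grind

lemma lt_abs_shrink_iff {r t : ℝ} (hr : 0 ≤ r) (ht : 0 ≤ t) (x : ℝ) :
    t < |shrink r x| ↔ t + r < |x| := by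
  rw [abs_shrink hr, lt_max_iff]
  constructor
  · rintro (h | h) <;> linarith
  · intro h; left; linarith

lemma abs_shrink_le_two_mul_abs_shrink_add_half {r ε x : ℝ} (hr : 0 ≤ r) (hε : 0 < ε)
    (hx : ε ≤ |shrink r x|) : |shrink r x| ≤ 2 * |shrink (r + ε / 2) x| := by
  rw [abs_shrink hr] at hx ⊢
  rw [abs_shrink (by linarith)]
  rcases le_max_iff.1 hx with h | h
  · rw [max_eq_left (by linarith), max_eq_left (by linarith)]; linarith
  · linarith

lemma lintegral_sq_eq_lintegral_meas_lt_mul {α : Type*} [MeasurableSpace α] (μ : Measure α)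
    {f : α → ℝ} (hf : AEMeasurable f μ) :
    ∫⁻ ω, ENNReal.ofReal (f ω ^ 2) ∂μ =
      2 * ∫⁻ t in Set.Ioi 0, ENNReal.ofReal t * μ {ω | t < |f ω|} := by
  have layercake := lintegral_comp_eq_lintegral_meas_lt_mul μ (g := fun t => 2 * t)
    (ae_of_all _ fun ω => abs_nonneg (f ω)) hf.abs
    (fun t _ => intervalIntegral.intervalIntegrable_id.const_mul 2)
    ((ae_restrict_iff' measurableSet_Ioi).2 (ae_of_all _ fun t (ht : 0 < t) => by positivity))
  have hprim : ∀ a : ℝ, ∫ t in (0 : ℝ)..|a|, 2 * t = a ^ 2 := fun a => by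
    rw [intervalIntegral.integral_const_mul, integral_id, sq_abs]; ring
  simp only [hprim] at layercake
  rw [layercake, ← lintegral_const_mul' _ _ ENNReal.ofNat_ne_top]
  refine lintegral_congr fun t => ?_
  rw [ENNReal.ofReal_mul zero_le_two, ENNReal.ofReal_ofNat]
  ring

lemma lintegral_shrink_sq [MeasurableSpace Ω] {μ : Measure Ω} {X : Ω → ℝ}
    (hX : AEMeasurable X μ) {s : ℝ} (hs : 0 ≤ s) :
    ∫⁻ ω, ENNReal.ofReal (shrink s (X ω) ^ 2) ∂μ = 2 * Gfun μ X s := by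
  rw [lintegral_sq_eq_lintegral_meas_lt_mul μ (hX.shrink s), Gfun]
  congr 1
  refine setLIntegral_congr_fun measurableSet_Ioi fun t (ht : 0 < t) => ?_
  simp only [lt_abs_shrink_iff hs ht.le]

lemma setLIntegral_shrink_sq_le [MeasurableSpace Ω] {μ : Measure Ω} {X : Ω → ℝ}
    (hX : AEMeasurable X μ) {r ε : ℝ} (hr : 0 ≤ r) (hε : 0 < ε) :
    ∫⁻ ω in {ω | ε ≤ |shrink r (X ω)|}, ENNReal.ofReal (shrink r (X ω) ^ 2) ∂μ
      ≤ 8 * Gfun μ X (r + ε / 2) := by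
  have hs : 0 ≤ r + ε / 2 := by positivity
  have hg : AEMeasurable (fun ω => ENNReal.ofReal (shrink (r + ε / 2) (X ω) ^ 2)) μ :=
    ((hX.shrink _).pow_const 2).ennreal_ofReal
  calc ∫⁻ ω in {ω | ε ≤ |shrink r (X ω)|}, ENNReal.ofReal (shrink r (X ω) ^ 2) ∂μ
      ≤ ∫⁻ ω in {ω | ε ≤ |shrink r (X ω)|},
          4 * ENNReal.ofReal (shrink (r + ε / 2) (X ω) ^ 2) ∂μ := by
        refine setLIntegral_mono_ae (hg.const_mul 4).restrict (ae_of_all _ fun ω hω => ?_)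
        rw [← ENNReal.ofReal_ofNat, ← ENNReal.ofReal_mul zero_le_four]
        refine ENNReal.ofReal_le_ofReal ?_
        have := abs_shrink_le_two_mul_abs_shrink_add_half hr hε hω
        rw [← sq_abs, ← sq_abs (shrink (r + ε / 2) (X ω))]
        nlinarith [abs_nonneg (shrink r (X ω))]
    _ ≤ ∫⁻ ω, 4 * ENNReal.ofReal (shrink (r + ε / 2) (X ω) ^ 2) ∂μ :=
        setLIntegral_le_lintegral _ _
    _ = 8 * Gfun μ X (r + ε / 2) := by
        rw [lintegral_const_mul'' _ hg, lintegral_shrink_sq hX hs, ← mul_assoc]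
        norm_num

theorem truncated_second_moment_le_general
    [MeasurableSpace Ω] (P : Measure Ω)
    (X₀ : Ω → ℝ) (hmeas : Measurable X₀)
    (hG : ∀ r : ℝ, 0 ≤ r → 0 < Gfun P X₀ r ∧ Gfun P X₀ r < ∞) :
    ∀ r : ℝ, 0 ≤ r → ∀ ε : ℝ, 0 < ε →
      (∫ ω in {ω | ε ≤ |shrink r (X₀ ω)|}, shrink r (X₀ ω) ^ 2 ∂P)
        ≤ 8 * (Gfun P X₀ (r + ε / 2)).toReal := by
  intro r hr ε hε
  have hGfin : Gfun P X₀ (r + ε / 2) ≠ ∞ := (hG _ (by positivity)).2.ne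
  rw [integral_eq_lintegral_of_nonneg_ae (ae_of_all _ fun ω => sq_nonneg _)
    ((hmeas.aemeasurable.shrink r).pow_const 2).restrict.aestronglyMeasurable]
  calc _ ≤ (8 * Gfun P X₀ (r + ε / 2)).toReal :=
        ENNReal.toReal_mono (ENNReal.mul_ne_top ENNReal.ofNat_ne_top hGfin)
          (setLIntegral_shrink_sq_le hmeas.aemeasurable hr hε)
    _ = 8 * (Gfun P X₀ (r + ε / 2)).toReal := by simp [ENNReal.toReal_mul]

/-- The key estimate in the proof of eq. (4.7):
`E[(U_r(X_0))² · 1(|U_r(X_0)| ≥ ε)] ≤ 8·G(r + ε/2)`. -/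
theorem truncated_second_moment_le
    [MeasurableSpace Ω] (P : Measure Ω) [IsProbabilityMeasure P]
    (X₀ : Ω → ℝ) (hmeas : Measurable X₀)
    (hG : ∀ r : ℝ, 0 ≤ r → 0 < Gfun P X₀ r ∧ Gfun P X₀ r < ∞)
    (hGratio : ∀ ε : ℝ, 0 < ε →
      Tendsto (fun r : ℝ => (Gfun P X₀ (r + ε)).toReal / (Gfun P X₀ r).toReal)
        atTop (𝓝 0)) :
    ∀ r : ℝ, 0 ≤ r → ∀ ε : ℝ, 0 < ε →
      (∫ ω in {ω | ε ≤ |shrink r (X₀ ω)|}, shrink r (X₀ ω) ^ 2 ∂P)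
        ≤ 8 * (Gfun P X₀ (r + ε / 2)).toReal :=
  truncated_second_moment_le_general P X₀ hmeas hG
end
end

section
/- Suppose X = (X_k, k ∈ ℤ) is a strictly stationary sequence of centered, square-integrable real-valued random variables such that ρ*(X,1) < 1. Then for every positive integer n, ([1−ρ*(X,1)]/[1+ρ*(X,1)])·n·E[X_0²] ≤ E[(∑_{k=1}^n X_k)²] ≤ ([1+ρ*(X,1)]/[1−ρ*(X,1)])·n·E[X_0²]. -/
open MeasureTheory ProbabilityTheory Filter Asymptotics
open scoped ENNReal Topology NNReal

noncomputable section

variable {Ω : Type*}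

/-!
Fix a finite block `I` of indices. For `J ⊆ I` put `u = ∑_{k ∈ J} X_k` and `v = ∑_{k ∈ I \ J} X_k`.
Disjoint index sets are at distance `≥ 1`, so `|E[uv]| ≤ ρ ‖u‖₂ ‖v‖₂` with `ρ = ρ*(1)`, and hence
`E(u+v)²` and `E(u-v)²` differ by at most `ρ` times their sum. Here `u + v = S_I := ∑_{k ∈ I} X_k`
does not depend on `J`, while averaging `E(u-v)²` over all `2^|I|` subsets `J` cancels the cross
terms and leaves `∑_{k ∈ I} E X_k²`. Thus `|E S_I² - ∑ E X_k²| ≤ ρ (E S_I² + ∑ E X_k²)`; by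
stationarity the sum is `n E X_0²`, and solving for `E S_I²` gives both bounds.
-/

open Finset

section MaxCorr

-- `A` and `B` come before `mΩ` so that instance resolution picks `mΩ` for `corr` and `maxCorr`.
variable {A B : MeasurableSpace Ω} [mΩ : MeasurableSpace Ω] {P : Measure Ω}

lemma abs_integral_mul_le_sqrt_mul_sqrt {f g : Ω → ℝ} (hf : MemLp f 2 P) (hg : MemLp g 2 P) :
    |∫ ω, f ω * g ω ∂P| ≤ √(∫ ω, f ω ^ 2 ∂P) * √(∫ ω, g ω ^ 2 ∂P) := by
  have h2 : ENNReal.ofReal 2 = 2 := by norm_num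
  calc |∫ ω, f ω * g ω ∂P| ≤ ∫ ω, |f ω| * |g ω| ∂P := by
        simpa only [abs_mul] using abs_integral_le_integral_abs (f := fun ω => f ω * g ω)
    _ ≤ (∫ ω, |f ω| ^ (2 : ℝ) ∂P) ^ (1 / 2 : ℝ) * (∫ ω, |g ω| ^ (2 : ℝ) ∂P) ^ (1 / 2 : ℝ) :=
        integral_mul_le_Lp_mul_Lq_of_nonneg Real.HolderConjugate.two_two
          (ae_of_all _ fun _ => abs_nonneg _) (ae_of_all _ fun _ => abs_nonneg _)
          (h2 ▸ hf.abs) (h2 ▸ hg.abs)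
    _ = _ := by simp only [Real.rpow_two, sq_abs, Real.sqrt_eq_rpow]

variable [IsFiniteMeasure P]

lemma abs_corr_le_one {f g : Ω → ℝ} (hf : MemLp f 2 P) (hg : MemLp g 2 P) :
    |corr P f g| ≤ 1 := by
  rw [corr, abs_div, abs_of_nonneg (a := √_ * √_) (by positivity)]
  exact div_le_one_of_le₀
    (abs_integral_mul_le_sqrt_mul_sqrt (f := fun ω => f ω - ∫ x, f x ∂P)
      (g := fun ω => g ω - ∫ x, g x ∂P) (hf.sub (memLp_const _)) (hg.sub (memLp_const _)))
    (by positivity)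

lemma abs_corr_le_maxCorr {f g : Ω → ℝ}
    (hfA : Measurable[A] f) (hgB : Measurable[B] g) (hf : MemLp f 2 P) (hg : MemLp g 2 P) :
    |corr P f g| ≤ maxCorr P A B :=
  le_csSup ⟨1, by rintro c ⟨f, g, -, -, hf, hg, rfl⟩; exact abs_corr_le_one hf hg⟩
    ⟨f, g, hfA, hgB, hf, hg, rfl⟩

lemma maxCorr_nonneg : 0 ≤ maxCorr P A B :=
  (abs_nonneg _).trans <| abs_corr_le_maxCorr (@measurable_const _ _ _ A 0)
    (@measurable_const _ _ _ B 0) (memLp_const 0) (memLp_const 0)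

lemma maxCorr_le_one : maxCorr P A B ≤ 1 :=
  csSup_le ⟨_, 0, 0, @measurable_const _ _ _ A 0, @measurable_const _ _ _ B 0,
      memLp_const 0, memLp_const 0, rfl⟩
    (by rintro c ⟨f, g, -, -, hf, hg, rfl⟩; exact abs_corr_le_one hf hg)

lemma abs_integral_mul_le_maxCorr {f g : Ω → ℝ}
    (hfA : Measurable[A] f) (hgB : Measurable[B] g) (hf : MemLp f 2 P) (hg : MemLp g 2 P)
    (hf0 : ∫ ω, f ω ∂P = 0) (hg0 : ∫ ω, g ω ∂P = 0) :
    |∫ ω, f ω * g ω ∂P| ≤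
      maxCorr P A B * (√(∫ ω, f ω ^ 2 ∂P) * √(∫ ω, g ω ^ 2 ∂P)) := by
  have hcorr := abs_corr_le_maxCorr hfA hgB hf hg
  rw [corr, hf0, hg0] at hcorr
  simp only [sub_zero] at hcorr
  rcases (show 0 ≤ √(∫ ω, f ω ^ 2 ∂P) * √(∫ ω, g ω ^ 2 ∂P) by positivity).eq_or_lt with h0 | hpos
  · rw [← h0, mul_zero]
    exact (abs_integral_mul_le_sqrt_mul_sqrt hf hg).trans h0.ge
  · rwa [abs_div, abs_of_pos hpos, div_le_iff₀ hpos] at hcorr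

end MaxCorr

section RhoStar

variable [MeasurableSpace Ω] {P : Measure Ω} [IsFiniteMeasure P] {X : ℤ → Ω → ℝ}

lemma maxCorr_genFrom_le_rhoStarCoef_one {S T : Set ℤ} (hS : S.Nonempty) (hT : T.Nonempty)
    (hST : Disjoint S T) : maxCorr P (genFrom X S) (genFrom X T) ≤ rhoStarCoef P X 1 := by
  refine le_csSup ⟨1, ?_⟩ ⟨S, T, hS, hT, hST, fun s hs t ht => ?_, rfl⟩
  · rintro c ⟨S', T', -, -, -, -, rfl⟩
    exact maxCorr_le_one
  · exact_mod_cast Int.one_le_abs (sub_ne_zero.mpr (hST.ne_of_mem hs ht))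

lemma rhoStarCoef_one_nonneg : 0 ≤ rhoStarCoef P X 1 :=
  maxCorr_nonneg.trans <| maxCorr_genFrom_le_rhoStarCoef_one (Set.singleton_nonempty 0)
    (Set.singleton_nonempty 1) (by simp)

lemma measurable_genFrom_sum (X : ℤ → Ω → ℝ) (A : Finset ℤ) :
    Measurable[genFrom X A] fun ω => ∑ k ∈ A, X k ω :=
  Finset.measurable_sum _ fun _ hk => measurable_iff_comap_le.mpr <|
    le_biSup (fun k => MeasurableSpace.comap (X k) inferInstance) (Finset.mem_coe.mpr hk)

lemma abs_integral_sum_mul_sum_le (hL2 : ∀ k, MemLp (X k) 2 P)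
    (hcent : ∀ k, ∫ ω, X k ω ∂P = 0) {A B : Finset ℤ} (hAB : Disjoint A B) :
    |∫ ω, (∑ k ∈ A, X k ω) * (∑ k ∈ B, X k ω) ∂P| ≤ rhoStarCoef P X 1 *
      (√(∫ ω, (∑ k ∈ A, X k ω) ^ 2 ∂P) * √(∫ ω, (∑ k ∈ B, X k ω) ^ 2 ∂P)) := by
  rcases A.eq_empty_or_nonempty with rfl | hA
  · simp
  rcases B.eq_empty_or_nonempty with rfl | hB
  · simp
  have hsum_L2 (C : Finset ℤ) : MemLp (fun ω => ∑ k ∈ C, X k ω) 2 P :=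
    memLp_finsetSum C fun k _ => hL2 k
  have hsum_cent (C : Finset ℤ) : ∫ ω, ∑ k ∈ C, X k ω ∂P = 0 := by
    simp [integral_finsetSum _ fun k _ => (hL2 k).integrable one_le_two, hcent]
  refine (abs_integral_mul_le_maxCorr (measurable_genFrom_sum X A) (measurable_genFrom_sum X B)
    (hsum_L2 A) (hsum_L2 B) (hsum_cent A) (hsum_cent B)).trans ?_
  exact mul_le_mul_of_nonneg_right (maxCorr_genFrom_le_rhoStarCoef_one (by simpa) (by simpa)
    (by simpa)) (by positivity)

end RhoStar

lemma sum_powerset_sq_sum_sub_sum_sdiff {ι : Type*} [DecidableEq ι] (y : ι → ℝ) (I : Finset ι) :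
    ∑ J ∈ I.powerset, (∑ k ∈ J, y k - ∑ k ∈ I \ J, y k) ^ 2 = 2 ^ #I * ∑ k ∈ I, y k ^ 2 := by
  induction I using Finset.induction_on with
  | empty => simp
  | insert a I ha ih =>
    have hpair (J : Finset ι) (hJ : J ∈ I.powerset) :
        (∑ k ∈ J, y k - ∑ k ∈ insert a I \ J, y k) ^ 2 +
            (∑ k ∈ insert a J, y k - ∑ k ∈ insert a I \ insert a J, y k) ^ 2 =
          2 * (y a ^ 2 + (∑ k ∈ J, y k - ∑ k ∈ I \ J, y k) ^ 2) := by
      have haJ : a ∉ J := fun h => ha (mem_powerset.mp hJ h)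
      rw [insert_sdiff_of_notMem _ haJ, insert_sdiff_insert, sdiff_insert_of_notMem ha,
        sum_insert (fun h => ha (mem_sdiff.mp h).1), sum_insert haJ]
      ring
    rw [sum_powerset_insert ha, ← sum_add_distrib, sum_congr rfl hpair, ← mul_sum,
      sum_add_distrib, ih, sum_const, card_powerset, card_insert_of_notMem ha, sum_insert ha]
    simp only [nsmul_eq_mul, Nat.cast_pow, Nat.cast_ofNat]
    ring

section Expansion

variable [MeasurableSpace Ω] {P : Measure Ω} {u v : Ω → ℝ}

lemma integral_add_sq_sub_integral_sub_sq (hu : MemLp u 2 P) (hv : MemLp v 2 P) :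
    ∫ ω, (u ω + v ω) ^ 2 ∂P - ∫ ω, (u ω - v ω) ^ 2 ∂P = 4 * ∫ ω, u ω * v ω ∂P := by
  rw [← integral_sub (f := fun ω => (u ω + v ω) ^ 2) (g := fun ω => (u ω - v ω) ^ 2)
    (hu.add hv).integrable_sq (hu.sub hv).integrable_sq, ← integral_const_mul]
  congr 1 with ω
  ring

lemma integral_add_sq_add_integral_sub_sq (hu : MemLp u 2 P) (hv : MemLp v 2 P) :
    ∫ ω, (u ω + v ω) ^ 2 ∂P + ∫ ω, (u ω - v ω) ^ 2 ∂P =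
      2 * (∫ ω, u ω ^ 2 ∂P + ∫ ω, v ω ^ 2 ∂P) := by
  rw [← integral_add (f := fun ω => (u ω + v ω) ^ 2) (g := fun ω => (u ω - v ω) ^ 2)
      (hu.add hv).integrable_sq (hu.sub hv).integrable_sq,
    ← integral_add hu.integrable_sq hv.integrable_sq, ← integral_const_mul]
  congr 1 with ω
  ring

lemma abs_integral_add_sq_sub_integral_sub_sq_le {ρ : ℝ} (hρ : 0 ≤ ρ)
    (hu : MemLp u 2 P) (hv : MemLp v 2 P)
    (huv : |∫ ω, u ω * v ω ∂P| ≤ ρ * (√(∫ ω, u ω ^ 2 ∂P) * √(∫ ω, v ω ^ 2 ∂P))) :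
    |∫ ω, (u ω + v ω) ^ 2 ∂P - ∫ ω, (u ω - v ω) ^ 2 ∂P| ≤
      ρ * (∫ ω, (u ω + v ω) ^ 2 ∂P + ∫ ω, (u ω - v ω) ^ 2 ∂P) := by
  rw [integral_add_sq_sub_integral_sub_sq hu hv, integral_add_sq_add_integral_sub_sq hu hv,
    abs_mul, abs_of_pos (four_pos : (0 : ℝ) < 4)]
  have hamgm := two_mul_le_add_sq √(∫ ω, u ω ^ 2 ∂P) √(∫ ω, v ω ^ 2 ∂P)
  rw [Real.sq_sqrt (integral_nonneg fun ω => sq_nonneg _),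
    Real.sq_sqrt (integral_nonneg fun ω => sq_nonneg _)] at hamgm
  nlinarith

end Expansion

section Variance

variable [MeasurableSpace Ω] {P : Measure Ω} [IsFiniteMeasure P] {X : ℤ → Ω → ℝ}

lemma abs_integral_sq_sum_sub_sum_integral_sq_le (hL2 : ∀ k, MemLp (X k) 2 P)
    (hcent : ∀ k, ∫ ω, X k ω ∂P = 0) (I : Finset ℤ) :
    |∫ ω, (∑ k ∈ I, X k ω) ^ 2 ∂P - ∑ k ∈ I, ∫ ω, X k ω ^ 2 ∂P| ≤
      rhoStarCoef P X 1 * (∫ ω, (∑ k ∈ I, X k ω) ^ 2 ∂P + ∑ k ∈ I, ∫ ω, X k ω ^ 2 ∂P) := by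
  set ρ := rhoStarCoef P X 1
  set V := ∫ ω, (∑ k ∈ I, X k ω) ^ 2 ∂P
  set m := ∑ k ∈ I, ∫ ω, X k ω ^ 2 ∂P
  have hsum_L2 (C : Finset ℤ) : MemLp (fun ω => ∑ k ∈ C, X k ω) 2 P :=
    memLp_finsetSum C fun k _ => hL2 k
  let d (J : Finset ℤ) : ℝ := ∫ ω, (∑ k ∈ J, X k ω - ∑ k ∈ I \ J, X k ω) ^ 2 ∂P
  have hd_sum : ∑ J ∈ I.powerset, d J = 2 ^ #I * m := calc
    ∑ J ∈ I.powerset, d J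
        = ∫ ω, ∑ J ∈ I.powerset, (∑ k ∈ J, X k ω - ∑ k ∈ I \ J, X k ω) ^ 2 ∂P :=
      (integral_finsetSum _ fun J _ => ((hsum_L2 J).sub (hsum_L2 _)).integrable_sq).symm
    _ = ∫ ω, 2 ^ #I * ∑ k ∈ I, X k ω ^ 2 ∂P := by
      simp_rw [sum_powerset_sq_sum_sub_sum_sdiff]
    _ = 2 ^ #I * m := by
      rw [integral_const_mul, integral_finsetSum _ fun k _ => (hL2 k).integrable_sq]
  have hd (J : Finset ℤ) (hJ : J ∈ I.powerset) : |V - d J| ≤ ρ * (V + d J) := by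
    have hV : V = ∫ ω, (∑ k ∈ J, X k ω + ∑ k ∈ I \ J, X k ω) ^ 2 ∂P := by
      simp_rw [add_comm (∑ k ∈ J, X _ _), sum_sdiff (mem_powerset.mp hJ)]
      rfl
    rw [hV]
    exact abs_integral_add_sq_sub_integral_sub_sq_le rhoStarCoef_one_nonneg (hsum_L2 J)
      (hsum_L2 _) (abs_integral_sum_mul_sum_le hL2 hcent disjoint_sdiff)
  have hpow : (0 : ℝ) < 2 ^ #I := by positivity
  refine le_of_mul_le_mul_left ?_ hpow
  calc 2 ^ #I * |V - m| = |∑ J ∈ I.powerset, (V - d J)| := by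
        rw [sum_sub_distrib, hd_sum, sum_const, card_powerset, nsmul_eq_mul, Nat.cast_pow,
          Nat.cast_ofNat, ← mul_sub, abs_mul, abs_of_pos hpow]
    _ ≤ ∑ J ∈ I.powerset, ρ * (V + d J) := (abs_sum_le_sum_abs _ _).trans (sum_le_sum hd)
    _ = 2 ^ #I * (ρ * (V + m)) := by
        rw [← mul_sum, sum_add_distrib, hd_sum, sum_const, card_powerset, nsmul_eq_mul]
        push_cast
        ring

end Variance

lemma StrictlyStationary.identDistrib [MeasurableSpace Ω] {P : Measure Ω} {X : ℤ → Ω → ℝ}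
    (hstat : StrictlyStationary P X) (hX : ∀ k, AEMeasurable (X k) P) (j l : ℤ) :
    IdentDistrib (X j) (X l) P P where
  aemeasurable_fst := hX j
  aemeasurable_snd := hX l
  map_eq := by
    have hmap (i : ℤ) : P.map (X i) =
        (P.map fun ω (t : Fin (0 + 1)) => X (i + t) ω).map fun x => x 0 := by
      rw [AEMeasurable.map_map_of_aemeasurable (measurable_pi_apply 0).aemeasurable
        (aemeasurable_pi_lambda _ fun t => hX _)]
      simp [Function.comp_def]
    rw [hmap j, hmap l, hstat j l 0]

lemma le_and_le_of_abs_sub_le_mul_add {V m ρ : ℝ} (hρ₀ : 0 ≤ ρ) (hρ₁ : ρ < 1)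
    (h : |V - m| ≤ ρ * (V + m)) :
    (1 - ρ) / (1 + ρ) * m ≤ V ∧ V ≤ (1 + ρ) / (1 - ρ) * m := by
  obtain ⟨hlow, hupp⟩ := abs_le.mp h
  constructor
  · rw [div_mul_eq_mul_div, div_le_iff₀ (by linarith)]
    linarith
  · rw [div_mul_eq_mul_div, le_div_iff₀ (by linarith)]
    linarith

theorem rhoStar_variance_bounds_general
    [MeasurableSpace Ω] (P : Measure Ω) [IsProbabilityMeasure P]
    (X : ℤ → Ω → ℝ) (hstat : StrictlyStationary P X)
    (hL2 : ∀ k, MemLp (X k) 2 P) (hcent : ∀ k, ∫ ω, X k ω ∂P = 0)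
    (hrho : rhoStarCoef P X 1 < 1) :
    ∀ n : ℕ, 0 < n →
      ((1 - rhoStarCoef P X 1) / (1 + rhoStarCoef P X 1)) * n * ∫ ω, X 0 ω ^ 2 ∂P ≤
          ∫ ω, (∑ k ∈ Finset.Icc (1 : ℤ) (n : ℤ), X k ω) ^ 2 ∂P ∧
        ∫ ω, (∑ k ∈ Finset.Icc (1 : ℤ) (n : ℤ), X k ω) ^ 2 ∂P ≤
          ((1 + rhoStarCoef P X 1) / (1 - rhoStarCoef P X 1)) * n * ∫ ω, X 0 ω ^ 2 ∂P := by
  intro n _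
  have hsecond (k : ℤ) : ∫ ω, X k ω ^ 2 ∂P = ∫ ω, X 0 ω ^ 2 ∂P :=
    ((hstat.identDistrib (fun k => (hL2 k).aestronglyMeasurable.aemeasurable) k 0).comp
      (measurable_id.pow_const 2)).integral_eq
  have hsum : ∑ k ∈ Icc (1 : ℤ) n, ∫ ω, X k ω ^ 2 ∂P = n * ∫ ω, X 0 ω ^ 2 ∂P := by
    simp [hsecond]
  simp only [mul_assoc]
  exact le_and_le_of_abs_sub_le_mul_add rhoStarCoef_one_nonneg hrho
    (hsum ▸ abs_integral_sq_sum_sub_sum_integral_sq_le hL2 hcent _)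

/-- **Lemma 6.2.** Two-sided variance bounds for strictly stationary sequences with
`ρ*(1) < 1`. -/
theorem rhoStar_variance_bounds
    [MeasurableSpace Ω] (P : Measure Ω) [IsProbabilityMeasure P]
    (X : ℤ → Ω → ℝ) (hmeas : ∀ k, Measurable (X k)) (hstat : StrictlyStationary P X)
    (hL2 : ∀ k, MemLp (X k) 2 P) (hcent : ∀ k, ∫ ω, X k ω ∂P = 0)
    (hrho : rhoStarCoef P X 1 < 1) :
    ∀ n : ℕ, 0 < n →
      ((1 - rhoStarCoef P X 1) / (1 + rhoStarCoef P X 1)) * n * ∫ ω, X 0 ω ^ 2 ∂P ≤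
          ∫ ω, (∑ k ∈ Finset.Icc (1 : ℤ) (n : ℤ), X k ω) ^ 2 ∂P ∧
        ∫ ω, (∑ k ∈ Finset.Icc (1 : ℤ) (n : ℤ), X k ω) ^ 2 ∂P ≤
          ((1 + rhoStarCoef P X 1) / (1 - rhoStarCoef P X 1)) * n * ∫ ω, X 0 ω ^ 2 ∂P :=
  rhoStar_variance_bounds_general P X hstat hL2 hcent hrho
end
end
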